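/- arXiv:1409.0083 — 3 statements merged into one kernel-verified Lean document; each statement's English description precedes it below -/
import Mathlib

section
/- For symmetric positive definite matrices P and Q of size n, the equation D⁻¹ Q D⁻¹ = P in the unknown symmetric positive definite matrix D has the unique positive definite solution D = Q^{1/2} (Q^{-1/2} P^{-1} Q^{-1/2})^{1/2} Q^{1/2}. -/
open Matrix

lemma posDef_conj_aux {n : ℕ} {A B : Matrix (Fin n) (Fin n) ℝ}
    (hA : A.PosDef) (hB : IsUnit B) : (Bᴴ * A * B).PosDef := by
  constructor
  · exact isHermitian_conjTranspose_mul_mul B hA.1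
  · exact (hA.conjTranspose_mul_mul_same (mulVec_injective_of_isUnit hB)).2

/-- The equation `D⁻¹ Q D⁻¹ = P` in the unknown SPD matrix `D` has the unique
positive definite solution `D = Q^{1/2} (Q^{-1/2} P⁻¹ Q^{-1/2})^{1/2} Q^{1/2}`.
Here `Qh` is the unique SPD square root of `Q` (so `Qh⁻¹ = Q^{-1/2}`) and `M` is
the unique SPD square root of `Q^{-1/2} P⁻¹ Q^{-1/2}`. -/
theorem riccati_unique_solution {n : ℕ} {P Q : Matrix (Fin n) (Fin n) ℝ}
    (hP : P.PosDef) (hQ : Q.PosDef)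
    (Qh : Matrix (Fin n) (Fin n) ℝ) (hQh : Qh.PosDef) (hQh2 : Qh * Qh = Q)
    (M : Matrix (Fin n) (Fin n) ℝ) (hM : M.PosDef)
    (hM2 : M * M = Qh⁻¹ * P⁻¹ * Qh⁻¹) :
    (Qh * M * Qh).PosDef ∧
    (Qh * M * Qh)⁻¹ * Q * (Qh * M * Qh)⁻¹ = P ∧
    ∀ D : Matrix (Fin n) (Fin n) ℝ, D.PosDef → D⁻¹ * Q * D⁻¹ = P →
      D = Qh * M * Qh := by
  have hQhH : Qhᴴ = Qh := hQh.isHermitian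
  have hQhU : IsUnit Qh := hQh.isUnit
  have hMU : IsUnit M := hM.isUnit
  have hPU : IsUnit P := hP.isUnit
  letI := hQhU.invertible
  letI := hMU.invertible
  letI := hPU.invertible
  have hPos : (Qh * M * Qh).PosDef := by
    have := posDef_conj_aux hM hQhU
    rwa [hQhH] at this
  have hinv : (Qh * M * Qh)⁻¹ = Qh⁻¹ * M⁻¹ * Qh⁻¹ := by
    rw [Matrix.mul_inv_rev, Matrix.mul_inv_rev, mul_assoc]
  have hQinv : Q⁻¹ = Qh⁻¹ * Qh⁻¹ := by rw [← hQh2, Matrix.mul_inv_rev]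
  have hMM : M⁻¹ * M⁻¹ = Qh * (P * Qh) := by
    have := congrArg Inv.inv hM2
    simpa only [Matrix.mul_inv_rev, Matrix.inv_inv_of_invertible, mul_assoc] using this
  have heq : (Qh * M * Qh)⁻¹ * Q * (Qh * M * Qh)⁻¹ = P := by
    rw [hinv, ← hQh2]
    calc Qh⁻¹ * M⁻¹ * Qh⁻¹ * (Qh * Qh) * (Qh⁻¹ * M⁻¹ * Qh⁻¹)
        = Qh⁻¹ * (M⁻¹ * M⁻¹) * Qh⁻¹ := by
          simp only [mul_assoc, Matrix.inv_mul_cancel_left_of_invertible,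
            Matrix.mul_inv_cancel_left_of_invertible]
      _ = Qh⁻¹ * (Qh * (P * Qh)) * Qh⁻¹ := by rw [hMM]
      _ = P := by
          simp only [mul_assoc, Matrix.inv_mul_cancel_left_of_invertible,
            Matrix.mul_inv_of_invertible, mul_one]
  refine ⟨hPos, heq, fun D hD hDeq => ?_⟩
  have hDU : IsUnit D := hD.isUnit
  letI := hDU.invertible
  have h1 : D * (Q⁻¹ * D) = P⁻¹ := by
    have := congrArg Inv.inv hDeq
    simpa only [Matrix.mul_inv_rev, Matrix.inv_inv_of_invertible, mul_assoc] using this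
  set N := Qh⁻¹ * D * Qh⁻¹ with hN
  have hQhiH : (Qh⁻¹)ᴴ = Qh⁻¹ := hQh.inv.isHermitian
  have hNPos : N.PosDef := by
    have := posDef_conj_aux hD hQh.inv.isUnit
    rwa [hQhiH] at this
  have hNN : N * N = M * M := by
    rw [hM2, ← h1, hQinv, hN]
    simp only [mul_assoc]
  have hNM : N = M :=
    open scoped MatrixOrder in
    (CFC.sq_eq_sq_iff N M hNPos.posSemidef.nonneg hM.posSemidef.nonneg).mp (by rw [pow_two, pow_two, hNN])
  have hfin : Qh * N * Qh = D := by
    rw [hN]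
    calc Qh * (Qh⁻¹ * D * Qh⁻¹) * Qh
        = Qh * (Qh⁻¹ * (D * (Qh⁻¹ * Qh))) := by simp only [mul_assoc]
      _ = D := by
          rw [Matrix.inv_mul_of_invertible, mul_one,
            Matrix.mul_inv_cancel_left_of_invertible]
  rw [← hfin, hNM]
end

section
/- For symmetric positive definite matrices A and B, the matrix G = A^{1/2}(A^{-1/2} B A^{-1/2})^{1/2} A^{1/2} (the Riemannian geometric mean of A and B) satisfies the Riccati equation G(A⁻¹ + B⁻¹)G = A + B. Consequently, G is a critical point of X ↦ J(X,A) + J(X,B), i.e., the geometric mean under the Jeffrey divergence coincides with the geometric mean under the affine invariant Riemannian metric. -/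
/-!
With `A = P²` and `B = P M² P`, the matrix `G = P M P` satisfies `G A⁻¹ G = B`; inverting this
congruence gives `G B⁻¹ G = A`, and adding the two yields the Riccati equation
`G (A⁻¹ + B⁻¹) G = A + B`, which is exactly the vanishing of the gradient of the Jeffrey
objective at `G`.
-/

open Matrix

namespace Matrix

variable {ι R : Type*} [Fintype ι] [DecidableEq ι] [CommRing R]

theorem inv_mul_mul_inv_eq_of_mul_mul_eq {G X Y : Matrix ι ι R} [Invertible G]
    (h : G * X * G = Y) : G⁻¹ * Y * G⁻¹ = X := by
  rw [← h, Matrix.mul_assoc G X G, inv_mul_cancel_left_of_invertible,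
    mul_inv_cancel_right_of_invertible]

theorem mul_inv_mul_eq_of_mul_inv_mul_eq {G A B : Matrix ι ι R} [Invertible G] [Invertible A]
    (h : G * A⁻¹ * G = B) : G * B⁻¹ * G = A := by
  have hB : B⁻¹ = G⁻¹ * A * G⁻¹ := by
    rw [← h, mul_inv_rev, mul_inv_rev, inv_inv_of_invertible, Matrix.mul_assoc]
  simp only [hB, Matrix.mul_assoc, mul_inv_cancel_left_of_invertible,
    inv_mul_of_invertible, Matrix.mul_one]

theorem mul_add_inv_mul_eq_add_of_mul_inv_mul_eq {G A B : Matrix ι ι R} [Invertible G]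
    [Invertible A] (h : G * A⁻¹ * G = B) : G * (A⁻¹ + B⁻¹) * G = A + B := by
  rw [Matrix.mul_add, Matrix.add_mul, h, mul_inv_mul_eq_of_mul_inv_mul_eq h, add_comm]

theorem mul_mul_mul_inv_mul_self_mul_mul_mul (P M : Matrix ι ι R) [Invertible P] :
    (P * M * P) * (P * P)⁻¹ * (P * M * P) = P * (M * M) * P := by
  simp only [mul_inv_rev, Matrix.mul_assoc, mul_inv_cancel_left_of_invertible,
    inv_mul_cancel_left_of_invertible]

end Matrix

theorem geometric_mean_jeffrey_eq_airm_general {n : ℕ} {A B : Matrix (Fin n) (Fin n) ℝ}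
    (Ah : Matrix (Fin n) (Fin n) ℝ) (hAh : Ah.PosDef) (hAh2 : Ah * Ah = A)
    (M : Matrix (Fin n) (Fin n) ℝ) (hM : M.PosDef)
    (hM2 : M * M = Ah⁻¹ * B * Ah⁻¹) :
    (Ah * M * Ah) * (A⁻¹ + B⁻¹) * (Ah * M * Ah) = A + B ∧
    ((1:ℝ)/2) • (A⁻¹ + B⁻¹ - (Ah * M * Ah)⁻¹ * (A + B) * (Ah * M * Ah)⁻¹) = 0 := by
  have : Invertible Ah := hAh.isUnit.invertible
  have : Invertible M := hM.isUnit.invertible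
  have : Invertible (Ah * Ah) := invertibleMul _ _
  have : Invertible (Ah * M) := invertibleMul _ _
  have : Invertible (Ah * M * Ah) := invertibleMul _ _
  subst hAh2
  have hB : Ah * (M * M) * Ah = B := by
    simp only [hM2, Matrix.mul_assoc, mul_inv_cancel_left_of_invertible,
      inv_mul_of_invertible, Matrix.mul_one]
  have riccati := mul_add_inv_mul_eq_add_of_mul_inv_mul_eq
    ((mul_mul_mul_inv_mul_self_mul_mul_mul Ah M).trans hB)
  refine ⟨riccati, ?_⟩
  rw [inv_mul_mul_inv_eq_of_mul_mul_eq riccati, sub_self, smul_zero]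

/-- The Riemannian geometric mean `G = A^{1/2}(A^{-1/2} B A^{-1/2})^{1/2} A^{1/2}`
satisfies the Riccati equation `G(A⁻¹ + B⁻¹)G = A + B`, hence it is a critical
point of `X ↦ J(X,A) + J(X,B)` (whose gradient is
`(1/2)(A⁻¹ + B⁻¹ - X⁻¹(A+B)X⁻¹)`). Here `Ah` is the unique SPD square root of
`A` and `M` that of `A^{-1/2} B A^{-1/2}`. -/
theorem geometric_mean_jeffrey_eq_airm {n : ℕ} {A B : Matrix (Fin n) (Fin n) ℝ}
    (hA : A.PosDef) (hB : B.PosDef)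
    (Ah : Matrix (Fin n) (Fin n) ℝ) (hAh : Ah.PosDef) (hAh2 : Ah * Ah = A)
    (M : Matrix (Fin n) (Fin n) ℝ) (hM : M.PosDef)
    (hM2 : M * M = Ah⁻¹ * B * Ah⁻¹) :
    (Ah * M * Ah) * (A⁻¹ + B⁻¹) * (Ah * M * Ah) = A + B ∧
    ((1:ℝ)/2) • (A⁻¹ + B⁻¹ - (Ah * M * Ah)⁻¹ * (A + B) * (Ah * M * Ah)⁻¹) = 0 :=
  geometric_mean_jeffrey_eq_airm_general Ah hAh hAh2 M hM hM2
end

section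
/- The Riccati equation X A X = B in the unknown symmetric positive definite matrix X, where A and B are symmetric positive definite n×n matrices, has exactly one symmetric positive definite solution. -/
/-!
Conjugation by `√a` is a bijection of the strictly positive elements that turns `x * a * x` into
`(√a * x * √a) ^ 2`. So `x * a * x = b` says that `√a * x * √a` is a strictly positive square root
of `√a * b * √a`, and such a square root exists and is unique.
-/

open Matrix
open scoped MatrixOrder

namespace CFC

open Ring

variable {A : Type*} [PartialOrder A] [Ring A] [StarRing A] [TopologicalSpace A]
  [StarOrderedRing A] [Algebra ℝ A] [ContinuousFunctionalCalculus ℝ A IsSelfAdjoint]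
  [NonnegSpectrumClass ℝ A] [IsSemitopologicalRing A] [T2Space A]

lemma conjSqrt_mul_mul_eq_mul_self (a x : A) (ha : 0 ≤ a := by cfc_tac) :
    conjSqrt a (x * a * x) = conjSqrt a x * conjSqrt a x := by
  calc conjSqrt a (x * a * x) = sqrt a * x * (sqrt a * sqrt a) * x * sqrt a := by
        rw [sqrt_mul_sqrt_self a, conjSqrt_apply]; simp only [mul_assoc]
    _ = conjSqrt a x * conjSqrt a x := by simp only [conjSqrt_apply, mul_assoc]

lemma conjSqrt_injective {a : A} (ha : IsStrictlyPositive a) : Function.Injective (conjSqrt a) :=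
  Function.LeftInverse.injective fun x => conjSqrt_ringInverse_conjSqrt a x

lemma mul_mul_eq_iff_conjSqrt_eq_sqrt {a b x : A} (ha : IsStrictlyPositive a) (hb : 0 ≤ b)
    (hx : 0 ≤ x) :
    x * a * x = b ↔ conjSqrt a x = sqrt (conjSqrt a b) := by
  have hxa : 0 ≤ conjSqrt a x := by simpa using conjSqrt_le_conjSqrt (c := a) hx
  have hba : 0 ≤ conjSqrt a b := by simpa using conjSqrt_le_conjSqrt (c := a) hb
  rw [← (conjSqrt_injective ha).eq_iff, conjSqrt_mul_mul_eq_mul_self a x ha.nonneg,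
    eq_comm (a := conjSqrt a x), sqrt_eq_iff _ _ hba hxa]

theorem existsUnique_isStrictlyPositive_mul_mul_eq {a b : A} (ha : IsStrictlyPositive a)
    (hb : IsStrictlyPositive b) : ∃! x : A, IsStrictlyPositive x ∧ x * a * x = b := by
  have hroot : IsStrictlyPositive (sqrt (conjSqrt a b)) :=
    .sqrt _ ((isStrictlyPositive_conjSqrt_iff a b ha).mpr hb)
  have hx : IsStrictlyPositive (conjSqrt a⁻¹ʳ (sqrt (conjSqrt a b))) :=
    (isStrictlyPositive_conjSqrt_iff _ _ ha.ringInverse).mpr hroot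
  refine ⟨_, ⟨hx, ?_⟩, ?_⟩
  · exact (mul_mul_eq_iff_conjSqrt_eq_sqrt ha hb.nonneg hx.nonneg).mpr
      (conjSqrt_conjSqrt_ringInverse a _ ha)
  · rintro y ⟨hy, hyab⟩
    rw [mul_mul_eq_iff_conjSqrt_eq_sqrt ha hb.nonneg hy.nonneg] at hyab
    rw [← hyab, conjSqrt_ringInverse_conjSqrt a y ha]

end CFC

theorem riccati_exists_unique {n : ℕ} {A B : Matrix (Fin n) (Fin n) ℝ}
    (hA : A.PosDef) (hB : B.PosDef) :
    ∃! X : Matrix (Fin n) (Fin n) ℝ, X.PosDef ∧ X * A * X = B := by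
  simpa only [isStrictlyPositive_iff_posDef] using
    CFC.existsUnique_isStrictlyPositive_mul_mul_eq hA.isStrictlyPositive hB.isStrictlyPositive
end
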